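/- Fix training inputs x₁,...,x_n and let labels Y₁,...,Y_n ∈ {−1,1} be independent with P(Yⱼ = 1) arbitrary. For a classifier f let L̂(f) = (1/n)·Σⱼ 1{f(xⱼ) ≠ Yⱼ} be its training error and L(f) = E[L̂(f)] its expected error. Let f̂ be a classifier chosen as any (possibly randomized) function of the data (Y₁,...,Y_n). Then E[L(f̂) − L̂(f̂)] ≤ √(I(f̂(x); Y)/(2n)), where f̂(x) = (f̂(x₁),...,f̂(x_n)) and Y = (Y₁,...,Y_n). -/

import Mathlib

open MeasureTheory ProbabilityTheory Real NNReal

/-- Kullback–Leibler divergence `∫ log (dP/dQ) dP` (real-valued). -/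
noncomputable def klDivReal {α : Type*} [MeasurableSpace α] (P Q : Measure α) : ℝ :=
  ∫ x, llr P Q x ∂P

/-- Mutual information `I(X; Y)`: KL divergence between the joint law and the
product of the marginals. -/
noncomputable def mutualInfo {Ω α β : Type*} [MeasurableSpace Ω] [MeasurableSpace α]
    [MeasurableSpace β] (μ : Measure Ω) (X : Ω → α) (Y : Ω → β) : ℝ :=
  klDivReal (μ.map fun ω => (X ω, Y ω)) ((μ.map X).prod (μ.map Y))

/-- `X` is `σ`-sub-Gaussian (around zero): `E[exp (λ X)] ≤ exp (λ² σ² / 2)` for all `λ`. -/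
def IsSubGaussian {Ω : Type*} [MeasurableSpace Ω] (μ : Measure Ω) (X : Ω → ℝ) (σ : ℝ) : Prop :=
  ∀ l : ℝ, ∫ ω, Real.exp (l * X ω) ∂μ ≤ Real.exp (l ^ 2 * σ ^ 2 / 2)

/-!
For `λ > 0` the Donsker–Varadhan inequality gives
`λ · E_P[g] ≤ D(P ‖ Q) + log E_Q[exp (λ g)]`, where `P` is the joint law of the prediction
vector `F` and the labels `Y`, `Q` is the product of their laws, and `g (u, y)` is the gap between
the expected and the training error of the prediction vector `u` on the labels `y`. Under `Q` the
labels are independent of `u`, so by Hoeffding's lemma `g (u, ·)` is an average of `n` independent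
centred variables with values in intervals of length one, hence sub-Gaussian with variance proxy
`1 / (4n)`. Optimising over `λ` gives `E_P[g] ≤ √(2 · (1 / (4n)) · D(P ‖ Q))`, and
`D(P ‖ Q) = I(F; Y)`.
-/

lemma le_sqrt_two_mul_of_forall_pos_mul_le {a K c : ℝ} (hK : 0 ≤ K) (hc : 0 ≤ c)
    (h : ∀ l, 0 < l → l * a ≤ K + c * l ^ 2 / 2) : a ≤ √(2 * c * K) := by
  by_contra! hlt
  have ha : 0 < a := (Real.sqrt_nonneg _).trans_lt hlt
  have hsq : 2 * c * K < a ^ 2 := (Real.sqrt_lt' ha).1 hlt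
  rcases hc.eq_or_lt with rfl | hc
  · have := h ((K + 1) / a) (by positivity)
    rw [div_mul_cancel₀ _ ha.ne'] at this
    linarith
  · have := h (a / c) (by positivity)
    field_simp at this
    nlinarith

section LogLikelihoodRatio

variable {α : Type*} [MeasurableSpace α] {P Q : Measure α}
  [IsProbabilityMeasure P] [IsProbabilityMeasure Q]

lemma integral_llr_nonneg (hPQ : P ≪ Q) (h_int : Integrable (llr P Q) P) :
    0 ≤ ∫ x, llr P Q x ∂P := by
  simpa using InformationTheory.integral_llr_add_sub_measure_univ_nonneg hPQ h_int

/-- The Donsker–Varadhan inequality. -/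
lemma integral_le_integral_llr_add_log_integral_exp (hPQ : P ≪ Q)
    (h_int : Integrable (llr P Q) P) {f : α → ℝ} (hfP : Integrable f P)
    (hfQ : Integrable (fun x ↦ exp (f x)) Q) :
    ∫ x, f x ∂P ≤ ∫ x, llr P Q x ∂P + log (∫ x, exp (f x) ∂Q) := by
  have := isProbabilityMeasure_tilted hfQ
  have hgibbs := integral_llr_nonneg (hPQ.trans (absolutelyContinuous_tilted hfQ))
    (integrable_llr_tilted_right hPQ hfP h_int hfQ)
  rw [integral_llr_tilted_right hPQ hfP hfQ h_int] at hgibbs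
  linarith

lemma integral_le_sqrt_integral_llr_of_hasSubgaussianMGF (hPQ : P ≪ Q)
    (h_int : Integrable (llr P Q) P) {g : α → ℝ} (hgP : Integrable g P) {c : ℝ≥0}
    (hg : HasSubgaussianMGF g c Q) :
    ∫ x, g x ∂P ≤ √(2 * c * ∫ x, llr P Q x ∂P) := by
  refine le_sqrt_two_mul_of_forall_pos_mul_le (integral_llr_nonneg hPQ h_int) c.2 fun l _ ↦ ?_
  calc l * ∫ x, g x ∂P = ∫ x, l * g x ∂P := (integral_const_mul l g).symm
    _ ≤ ∫ x, llr P Q x ∂P + cgf g Q l :=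
      integral_le_integral_llr_add_log_integral_exp hPQ h_int (hgP.const_mul l)
        (hg.integrable_exp_mul l)
    _ ≤ ∫ x, llr P Q x ∂P + c * l ^ 2 / 2 := by gcongr; exact hg.cgf_le l

end LogLikelihoodRatio

lemma ProbabilityTheory.HasSubgaussianMGF.prod_of_forall {α β : Type*} [MeasurableSpace α]
    [MeasurableSpace β] {μ : Measure α} {ν : Measure β} [IsProbabilityMeasure μ] [SFinite ν]
    {g : α × β → ℝ} {c : ℝ≥0} (h_int : ∀ t, Integrable (fun p ↦ exp (t * g p)) (μ.prod ν))
    (hg : ∀ u, HasSubgaussianMGF (fun v ↦ g (u, v)) c ν) :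
    HasSubgaussianMGF g c (μ.prod ν) where
  integrable_exp_mul := h_int
  mgf_le t := calc
    mgf g (μ.prod ν) t = ∫ u, mgf (fun v ↦ g (u, v)) ν t ∂μ := integral_prod _ (h_int t)
    _ ≤ ∫ _, exp (c * t ^ 2 / 2) ∂μ :=
      integral_mono (h_int t).integral_prod_left (integrable_const _) fun u ↦ (hg u).mgf_le t
    _ = exp (c * t ^ 2 / 2) := by simp

lemma ProbabilityTheory.HasSubgaussianMGF.map_iff {Ω β : Type*} [MeasurableSpace Ω]
    [MeasurableSpace β] {μ : Measure Ω} {Y : Ω → β} {X : β → ℝ} {c : ℝ≥0} (hY : AEMeasurable Y μ)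
    (hX : AEMeasurable X (μ.map Y)) :
    HasSubgaussianMGF X c (μ.map Y) ↔ HasSubgaussianMGF (X ∘ Y) c μ := by
  rw [← HasSubgaussianMGF.id_map_iff hX,
    ← HasSubgaussianMGF.id_map_iff (hX.comp_aemeasurable hY),
    AEMeasurable.map_map_of_aemeasurable hX hY]

lemma integrable_of_ae_mem_finite {α : Type*} [MeasurableSpace α] [MeasurableSingletonClass α]
    {μ : Measure α} [IsFiniteMeasure μ] {s : Set α} (hs : s.Finite) (hμs : ∀ᵐ x ∂μ, x ∈ s)
    (f : α → ℝ) : Integrable f μ := by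
  simpa [IntegrableOn, Measure.restrict_eq_self_of_ae_mem hμs] using
    IntegrableOn.of_finite hs (μ := μ) (f := f)

section Discrete

variable {Ω α β : Type*} [MeasurableSpace Ω] [MeasurableSpace α] [MeasurableSpace β]
  [MeasurableSingletonClass α] [MeasurableSingletonClass β] {μ : Measure Ω} {X : Ω → α} {Y : Ω → β}

lemma ae_map_mem_of_forall_mem (hX : Measurable X) {s : Set α} (hs : s.Finite)
    (hXs : ∀ ω, X ω ∈ s) : ∀ᵐ u ∂(μ.map X), u ∈ s :=
  (ae_map_iff hX.aemeasurable hs.measurableSet).2 (ae_of_all _ hXs)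

lemma map_prodMk_absolutelyContinuous_prod_map [Countable α] [Countable β] (hX : Measurable X)
    (hY : Measurable Y) :
    μ.map (fun ω ↦ (X ω, Y ω)) ≪ (μ.map X).prod (μ.map Y) := by
  set P := μ.map (fun ω ↦ (X ω, Y ω))
  have hPX : P.fst = μ.map X := Measure.fst_map_prodMk hY
  have hPY : P.snd = μ.map Y := Measure.snd_map_prodMk hX
  intro s hs
  rw [measure_null_iff_singleton s.to_countable] at hs ⊢
  rintro ⟨u, v⟩ huv
  have hQ := hs (u, v) huv
  rw [← Set.singleton_prod_singleton, Measure.prod_prod, mul_eq_zero, ← hPX, ← hPY,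
    Measure.fst_apply (measurableSet_singleton u), Measure.snd_apply (measurableSet_singleton v)]
    at hQ
  refine hQ.elim (measure_mono_null fun p hp ↦ ?_) (measure_mono_null fun p hp ↦ ?_) <;>
    simp_all

/-- The information-usage bias bound of Russo and Zou. -/
theorem integral_le_sqrt_mutualInfo [Countable α] [Countable β] [IsProbabilityMeasure μ]
    (hX : Measurable X) (hY : Measurable Y) {s : Set α} {t : Set β} (hs : s.Finite)
    (ht : t.Finite) (hXs : ∀ ω, X ω ∈ s) (hYt : ∀ ω, Y ω ∈ t) {g : α × β → ℝ} {c : ℝ≥0}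
    (hg : ∀ u, HasSubgaussianMGF (fun v ↦ g (u, v)) c (μ.map Y)) :
    ∫ ω, g (X ω, Y ω) ∂μ ≤ √(2 * c * mutualInfo μ X Y) := by
  have hXY : Measurable fun ω ↦ (X ω, Y ω) := hX.prodMk hY
  have := Measure.isProbabilityMeasure_map (μ := μ) hX.aemeasurable
  have := Measure.isProbabilityMeasure_map (μ := μ) hY.aemeasurable
  have := Measure.isProbabilityMeasure_map (μ := μ) hXY.aemeasurable
  have hP (f : α × β → ℝ) : Integrable f (μ.map fun ω ↦ (X ω, Y ω)) :=
    integrable_of_ae_mem_finite (hs.prod ht)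
      (ae_map_mem_of_forall_mem hXY (hs.prod ht) fun ω ↦ ⟨hXs ω, hYt ω⟩) f
  have hQ (f : α × β → ℝ) : Integrable f ((μ.map X).prod (μ.map Y)) := by
    refine integrable_of_ae_mem_finite (hs.prod ht) ?_ f
    rw [Measure.ae_prod_mem_iff_ae_ae_mem (hs.prod ht).measurableSet]
    filter_upwards [ae_map_mem_of_forall_mem hX hs hXs] with u hu
    filter_upwards [ae_map_mem_of_forall_mem hY ht hYt] with v hv using ⟨hu, hv⟩
  rw [← integral_map hXY.aemeasurable (hP g).aestronglyMeasurable]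
  exact integral_le_sqrt_integral_llr_of_hasSubgaussianMGF
    (map_prodMk_absolutelyContinuous_prod_map hX hY) (hP _) (hP g)
    (.prod_of_forall (fun t ↦ hQ _) hg)

end Discrete

lemma hasSubgaussianMGF_mean_integral_sub_of_mem_Icc {Ω ι : Type*} [MeasurableSpace Ω]
    {μ : Measure Ω} [IsProbabilityMeasure μ] [Fintype ι] {X : ι → Ω → ℝ}
    (h_indep : iIndepFun X μ) (hX : ∀ i, AEMeasurable (X i) μ)
    (hb : ∀ i, ∀ᵐ ω ∂μ, X i ω ∈ Set.Icc 0 1) :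
    HasSubgaussianMGF (fun ω ↦ (Fintype.card ι : ℝ)⁻¹ * ∑ i, (μ[X i] - X i ω))
      (4 * Fintype.card ι)⁻¹ μ := by
  have h_indep' : iIndepFun (fun i ω ↦ μ[X i] - X i ω) μ := by
    exact h_indep.comp (fun i (x : ℝ) ↦ μ[X i] - x) fun _ ↦ measurable_const.sub measurable_id
  have h_each (i : ι) :
      HasSubgaussianMGF (fun ω ↦ μ[X i] - X i ω) ((‖(1 : ℝ) - 0‖₊ / 2) ^ 2) μ :=
    (hasSubgaussianMGF_of_mem_Icc (hX i) (hb i)).neg.congr (ae_of_all _ fun ω ↦ by simp)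
  convert (HasSubgaussianMGF.sum_of_iIndepFun h_indep' (s := .univ) fun i _ ↦ h_each i).const_mul
    (Fintype.card ι : ℝ)⁻¹ using 1
  apply NNReal.eq
  change _ = (Fintype.card ι : ℝ)⁻¹ ^ 2 * ((∑ _ : ι, (‖(1 : ℝ) - 0‖₊ / 2) ^ 2 : ℝ≥0) : ℝ)
  rcases eq_or_ne (Fintype.card ι) 0 with hι | hι
  · simp [hι]
  · simp only [mul_inv_rev, NNReal.coe_mul, NNReal.coe_inv, NNReal.coe_natCast, NNReal.coe_ofNat,
      inv_pow, sub_zero, nnnorm_one, one_div, Finset.sum_const, Finset.card_univ, nsmul_eq_mul,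
      coe_pow]
    field_simp
    norm_num

lemma hasSubgaussianMGF_map_expectedError_sub_trainingError {Ω β : Type*} [MeasurableSpace Ω]
    [MeasurableSpace β] [MeasurableSingletonClass β] [Countable β] [DecidableEq β] {μ : Measure Ω}
    [IsProbabilityMeasure μ] {n : ℕ} {Y : Ω → Fin n → β} (hY : Measurable Y)
    (h_indep : iIndepFun (fun j ω ↦ Y ω j) μ) (u : Fin n → β) :
    HasSubgaussianMGF
      (fun v ↦ (n : ℝ)⁻¹ * ∑ j, ((μ {ω | Y ω j ≠ u j}).toReal - if u j ≠ v j then 1 else 0))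
      (4 * n)⁻¹ (μ.map Y) := by
  set A : Fin n → Set Ω := fun j ↦ {ω | Y ω j ≠ u j}
  have hA (j : Fin n) : MeasurableSet (A j) :=
    measurableSet_eq_fun (measurable_pi_apply j |>.comp hY) measurable_const |>.compl
  have h_indep' : iIndepFun (fun j ↦ (A j).indicator (1 : Ω → ℝ)) μ :=
    (h_indep.comp (fun j z ↦ if z ≠ u j then (1 : ℝ) else 0) fun _ ↦ measurable_of_countable _)
      |>.congr fun j ↦ ae_of_all _ fun ω ↦ by simp [A, Set.indicator_apply]
  have := hasSubgaussianMGF_mean_integral_sub_of_mem_Icc h_indep'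
    (fun j ↦ (measurable_one.indicator (hA j)).aemeasurable)
    (fun j ↦ ae_of_all _ fun ω ↦ ⟨Set.indicator_nonneg (fun _ _ ↦ zero_le_one) ω,
      Set.indicator_le_self' (fun _ _ ↦ zero_le_one) ω⟩)
  rw [HasSubgaussianMGF.map_iff hY.aemeasurable (measurable_of_countable _).aemeasurable]
  simp only [integral_indicator_one (hA _), Fintype.card_fin] at this
  refine this.congr (ae_of_all _ fun ω ↦ ?_)
  simp [A, Set.indicator_apply, measureReal_def, eq_comm]

theorem generalization_gap_le_mutualInfo_general
    {Ω : Type*} [MeasurableSpace Ω] (μ : Measure Ω) [IsProbabilityMeasure μ]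
    {n : ℕ}
    (Y : Ω → Fin n → ℤ) (F : Ω → Fin n → ℤ)
    (hY : Measurable Y) (hF : Measurable F)
    (hYval : ∀ ω j, Y ω j = 1 ∨ Y ω j = -1)
    (hFval : ∀ ω j, F ω j = 1 ∨ F ω j = -1)
    (hindep : iIndepFun
      (fun j ω => Y ω j) μ)
    -- expected error of a fixed prediction vector `v`
    (L : (Fin n → ℤ) → ℝ)
    (hL : ∀ v, L v = (1 / (n : ℝ)) * ∑ j, (μ {ω | Y ω j ≠ v j}).toReal) :
    ∫ ω, (L (F ω) -
        (1 / (n : ℝ)) * ∑ j, (if F ω j ≠ Y ω j then (1 : ℝ) else 0)) ∂μ ≤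
      Real.sqrt (mutualInfo μ F Y / (2 * n)) := by
  set S : Set (Fin n → ℤ) := Set.univ.pi fun _ ↦ {1, -1}
  have hS : S.Finite := Set.Finite.pi fun _ ↦ Set.toFinite _
  have hgap (u : Fin n → ℤ) : HasSubgaussianMGF
      (fun v ↦ L u - (1 / (n : ℝ)) * ∑ j, (if u j ≠ v j then (1 : ℝ) else 0)) (4 * n)⁻¹
      (μ.map Y) := by
    convert hasSubgaussianMGF_map_expectedError_sub_trainingError hY hindep u using 2 with v
    rw [hL, Finset.sum_sub_distrib]
    ring
  calc _ ≤ √(2 * (4 * n : ℝ≥0)⁻¹ * mutualInfo μ F Y) :=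
        integral_le_sqrt_mutualInfo
          (g := fun p ↦ L p.1 - (1 / (n : ℝ)) * ∑ j, (if p.1 j ≠ p.2 j then (1 : ℝ) else 0))
          hF hY hS hS (fun ω ↦ by simpa [S] using hFval ω) (fun ω ↦ by simpa [S] using hYval ω)
          hgap
    _ = √(mutualInfo μ F Y / (2 * n)) := by
      push_cast
      ring_nf

theorem generalization_gap_le_mutualInfo
    {Ω : Type*} [MeasurableSpace Ω] (μ : Measure Ω) [IsProbabilityMeasure μ]
    {n : ℕ} (hn : 0 < n)
    (Y : Ω → Fin n → ℤ) (F : Ω → Fin n → ℤ)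
    (hY : Measurable Y) (hF : Measurable F)
    (hYval : ∀ ω j, Y ω j = 1 ∨ Y ω j = -1)
    (hFval : ∀ ω j, F ω j = 1 ∨ F ω j = -1)
    (hindep : iIndepFun
      (fun j ω => Y ω j) μ)
    -- expected error of a fixed prediction vector `v`
    (L : (Fin n → ℤ) → ℝ)
    (hL : ∀ v, L v = (1 / (n : ℝ)) * ∑ j, (μ {ω | Y ω j ≠ v j}).toReal) :
    ∫ ω, (L (F ω) -
        (1 / (n : ℝ)) * ∑ j, (if F ω j ≠ Y ω j then (1 : ℝ) else 0)) ∂μ ≤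
      Real.sqrt (mutualInfo μ F Y / (2 * n)) :=
  generalization_gap_le_mutualInfo_general μ Y F hY hF hYval hFval hindep L hL
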